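/- For every dimension d ≥ 1 and every k with 0 ≤ k ≤ d-1, there exists a constant c_d ∈ (0,1) (depending only on d) with the following property: for every compact convex set B ⊆ ℝ^d with nonempty interior, every ε ∈ (0,1), and every (k, c_d·ε)-net S for [0,1]^d, there exists a set S′ of k-flats with |S′| = |S| such that every compact convex set Ξ ⊆ ℝ^d with vol(Ξ ∩ B) ≥ ε·vol(B) is intersected by some flat in S′. -/

import Mathlib

open MeasureTheory

noncomputable section

/-- The unit cube `[0,1]^d` in `ℝ^d`. -/
def unitCube (d : ℕ) : Set (EuclideanSpace ℝ (Fin d)) :=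
  {x | ∀ i, x i ∈ Set.Icc (0 : ℝ) 1}

/-- A `k`-flat in `ℝ^d`: a (nonempty) affine subspace of dimension `k`. -/
def IsKFlat (d k : ℕ) (f : AffineSubspace ℝ (EuclideanSpace ℝ (Fin d))) : Prop :=
  (f : Set (EuclideanSpace ℝ (Fin d))).Nonempty ∧ Module.finrank ℝ f.direction = k

/-- A family `S` of flats is a `(k,ε)`-net for `[0,1]^d` if every compact convex set `Ξ`
with `vol (Ξ ∩ [0,1]^d) ≥ ε` is intersected by some flat of `S`. -/
def IsKENet (d : ℕ) (ε : ℝ)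
    (S : Set (AffineSubspace ℝ (EuclideanSpace ℝ (Fin d)))) : Prop :=
  ∀ Ξ : Set (EuclideanSpace ℝ (Fin d)), IsCompact Ξ → Convex ℝ Ξ →
    ENNReal.ofReal ε ≤ volume (Ξ ∩ unitCube d) →
    ∃ f ∈ S, (Ξ ∩ (f : Set (EuclideanSpace ℝ (Fin d)))).Nonempty

/-!
Let `p, p + b₁, …, p + b_d` be a simplex of maximal volume with vertices in `B`. Replacing a
vertex `p + bᵢ` by a point `x ∈ B` multiplies the volume by the `i`-th coordinate of `x - p` in
the basis `b` (Cramer's rule), so maximality puts `B` inside the parallelepiped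
`p + [-1,1]b₁ + ⋯ + [-1,1]b_d = T [0,1]^d` for an affine map `T`. By convexity `B` contains the
small parallelepiped `p + [0,1/(d+1)]b₁ + ⋯`, so `vol (T [0,1]^d) ≤ (2(d+1))^d vol B`. Hence
`T⁻¹(Ξ ∩ B) ⊆ T⁻¹Ξ ∩ [0,1]^d` has volume at least `ε / (2(d+1))^d`, a net for the cube meets
`T⁻¹Ξ`, and the images under `T` of its flats meet `Ξ`.
-/

open Module Set Function Filter Topology
open scoped Pointwise

theorem Convex.add_sum_smul_mem {F ι : Type*} [AddCommGroup F] [Module ℝ F] [Fintype ι]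
    {s : Set F} (hs : Convex ℝ s) {p : F} (hp : p ∈ s) {w : ι → F} (hw : ∀ i, p + w i ∈ s)
    {t : ι → ℝ} (ht₀ : ∀ i, 0 ≤ t i) (ht₁ : ∑ i, t i ≤ 1) : p + ∑ i, t i • w i ∈ s := by
  have hcomb : p + ∑ i, t i • w i =
      ∑ j : Option ι, j.elim (1 - ∑ i, t i) t • j.elim p (p + w ·) := by
    simp only [Fintype.sum_option, Option.elim, smul_add, Finset.sum_add_distrib,
      ← Finset.sum_smul, sub_smul, one_smul]
    abel
  rw [hcomb]
  refine hs.sum_mem (fun j _ => ?_) ?_ (fun j _ => ?_)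
  · cases j <;> simp [ht₀, ht₁]
  · simp [Fintype.sum_option]
  · cases j <;> simp [hp, hw]

section MaximalSimplex

variable {E : Type*} [NormedAddCommGroup E] [NormedSpace ℝ E]
  {ι : Type*} [Fintype ι] [DecidableEq ι]

theorem Module.Basis.continuous_det [FiniteDimensional ℝ E] (e : Basis ι ℝ E) :
    Continuous fun v : ι → E => e.det v := by
  simp only [Basis.det_apply]
  refine Continuous.matrix_det (continuous_matrix fun i j => ?_)
  simp only [Basis.toMatrix_apply]
  exact (e.coord i).continuous_of_finiteDimensional.comp (continuous_apply j)

theorem Module.Basis.exists_det_sub_ne_zero_of_mem_interior (e : Basis ι ℝ E) {B : Set E}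
    {p : E} (hp : p ∈ interior B) :
    ∃ u : ι → E, (∀ i, u i ∈ B) ∧ e.det (fun i => u i - p) ≠ 0 := by
  have hδ : ∀ i, ∃ δ : ℝ, 0 < δ ∧ p + δ • e i ∈ B := fun i => by
    have hcont : Tendsto (fun t : ℝ => p + t • e i) (𝓝[>] 0) (𝓝 p) :=
      (Continuous.tendsto' (by fun_prop) 0 p (by simp)).mono_left nhdsWithin_le_nhds
    exact ((hcont.eventually (mem_interior_iff_mem_nhds.1 hp)).and
      self_mem_nhdsWithin).exists.imp fun δ h => ⟨h.2, h.1⟩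
  choose δ hδpos hδB using hδ
  refine ⟨fun i => p + δ i • e i, hδB, ?_⟩
  have hdet := e.det.toMultilinearMap.map_smul_univ δ e
  simp only [add_sub_cancel_left, AlternatingMap.coe_multilinearMap] at hdet ⊢
  rw [hdet, e.det_self, smul_eq_mul, mul_one]
  exact Finset.prod_ne_zero_iff.2 fun i _ => (hδpos i).ne'

theorem IsCompact.exists_maximal_simplex_basis [FiniteDimensional ℝ E] (e : Basis ι ℝ E)
    {B : Set E} (hB : IsCompact B) (hBint : (interior B).Nonempty) :
    ∃ p ∈ B, ∃ b : Basis ι ℝ E, (∀ i, p + b i ∈ B) ∧ ∀ x ∈ B, ∀ i, |b.repr (x - p) i| ≤ 1 := by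
  obtain ⟨x₀, hx₀⟩ := hBint
  obtain ⟨u₀, hu₀B, hu₀⟩ := e.exists_det_sub_ne_zero_of_mem_interior hx₀
  have hK : IsCompact (B ×ˢ univ.pi fun _ : ι => B) := hB.prod (isCompact_univ_pi fun _ => hB)
  have hvol : Continuous fun q : E × (ι → E) => |e.det fun i => q.2 i - q.1| :=
    continuous_abs.comp (e.continuous_det.comp (by fun_prop))
  obtain ⟨⟨p, u⟩, ⟨hp, hu⟩, hmax⟩ :=
    hK.exists_isMaxOn ⟨(x₀, u₀), interior_subset hx₀, fun i _ => hu₀B i⟩ hvol.continuousOn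
  replace hu : ∀ i, u i ∈ B := fun i => hu i (mem_univ i)
  replace hmax := isMaxOn_iff.1 hmax
  set w : ι → E := fun i => u i - p
  have hw : e.det w ≠ 0 :=
    abs_pos.1 ((abs_pos.2 hu₀).trans_le (hmax (x₀, u₀) ⟨interior_subset hx₀, fun i _ => hu₀B i⟩))
  have hmax_update : ∀ x ∈ B, ∀ i, |e.det (update w i (x - p))| ≤ |e.det w| := fun x hx i => by
    have hmem : (p, update u i x) ∈ B ×ˢ univ.pi fun _ : ι => B :=
      ⟨hp, fun j _ => by rcases eq_or_ne j i with rfl | hj <;> simp [*]⟩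
    have hupd : update w i (x - p) = fun j => update u i x j - p := by
      ext1 j
      rcases eq_or_ne j i with rfl | hj <;> simp [w, *]
    simpa [hupd] using hmax _ hmem
  obtain ⟨hli, hsp⟩ := e.is_basis_iff_det.2 (isUnit_iff_ne_zero.2 hw)
  refine ⟨p, hp, Basis.mk hli hsp.ge, fun i => by simpa [w] using hu i, fun x hx i => ?_⟩
  have hcramer := congr($(e.det_smul_mk_coord_eq_det_update hli hsp.ge i) (x - p))
  simp only [LinearMap.smul_apply, Basis.coord_apply, smul_eq_mul,
    MultilinearMap.toLinearMap_apply, AlternatingMap.coe_multilinearMap] at hcramer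
  have hle := hmax_update x hx i
  rw [← hcramer, abs_mul] at hle
  exact le_of_mul_le_mul_left (by simpa using hle) (abs_pos.2 hw)

end MaximalSimplex

section AffineHaar

variable {E : Type*} [NormedAddCommGroup E] [NormedSpace ℝ E] [MeasurableSpace E] [BorelSpace E]
  [FiniteDimensional ℝ E] (μ : Measure E) [μ.IsAddHaarMeasure]

theorem AffineEquiv.addHaar_image (T : E ≃ᵃ[ℝ] E) (s : Set E) :
    μ (T '' s) = ENNReal.ofReal |LinearMap.det (T.linear : E →ₗ[ℝ] E)| * μ s := by
  have hT : ⇑T = (· + T 0) ∘ T.linear := T.toAffineMap.decomp.trans rfl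
  rw [hT, image_comp, image_add_right, measure_preimage_add_right,
    ← Measure.addHaar_image_linearMap]
  rfl

theorem AffineEquiv.addHaar_image_vadd_smul (T : E ≃ᵃ[ℝ] E) (a : E) (r : ℝ) (s : Set E) :
    μ (T '' (a +ᵥ r • s)) = ENNReal.ofReal (|r| ^ finrank ℝ E) * μ (T '' s) := by
  rw [T.addHaar_image μ, T.addHaar_image μ, measure_vadd, Measure.addHaar_smul, abs_pow,
    mul_left_comm]

theorem AffineEquiv.addHaar_image_symm_mul_addHaar_image (T : E ≃ᵃ[ℝ] E) (s t : Set E) :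
    μ (T.symm '' s) * μ (T '' t) = μ s * μ t := by
  have hdet : LinearMap.det (T.linear : E →ₗ[ℝ] E) ≠ 0 :=
    (LinearEquiv.isUnit_det' T.linear).ne_zero
  rw [T.addHaar_image μ, T.symm.addHaar_image μ, T.linear_symm, LinearEquiv.det_coe_symm,
    abs_inv, mul_mul_mul_comm, ← ENNReal.ofReal_mul (by positivity),
    inv_mul_cancel₀ (abs_ne_zero.2 hdet), ENNReal.ofReal_one, one_mul]

theorem AffineEquiv.ofReal_div_le_addHaar_image_symm_inter (T : E ≃ᵃ[ℝ] E) {K B Ξ : Set E}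
    {C ε : ℝ} (hC : 0 < C) (hK : μ K = 1) (hBK : B ⊆ T '' K)
    (hTK : μ (T '' K) ≤ ENNReal.ofReal C * μ B) (hΞ : ENNReal.ofReal ε * μ B ≤ μ (Ξ ∩ B)) :
    ENNReal.ofReal (ε / C) ≤ μ (T.symm '' Ξ ∩ K) := by
  have hsub : T.symm '' (Ξ ∩ B) ⊆ T.symm '' Ξ ∩ K := by
    rintro _ ⟨y, ⟨hyΞ, hyB⟩, rfl⟩
    obtain ⟨x, hx, rfl⟩ := hBK hyB
    exact ⟨mem_image_of_mem _ hyΞ, by simpa using hx⟩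
  have hTK₀ : μ (T '' K) ≠ 0 := by
    rw [T.addHaar_image μ, hK, mul_one, ne_eq, ENNReal.ofReal_eq_zero, not_le, abs_pos]
    exact (LinearEquiv.isUnit_det' T.linear).ne_zero
  have hTK_top : μ (T '' K) ≠ ⊤ := by
    rw [T.addHaar_image μ, hK, mul_one]
    exact ENNReal.ofReal_ne_top
  have key : ENNReal.ofReal ε * μ (T '' K) ≤
      ENNReal.ofReal C * μ (T.symm '' (Ξ ∩ B)) * μ (T '' K) :=
    calc ENNReal.ofReal ε * μ (T '' K) ≤ ENNReal.ofReal C * (ENNReal.ofReal ε * μ B) := by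
          rw [mul_left_comm]; exact mul_le_mul_right hTK _
      _ ≤ ENNReal.ofReal C * μ (Ξ ∩ B) := by gcongr
      _ = ENNReal.ofReal C * μ (T.symm '' (Ξ ∩ B)) * μ (T '' K) := by
          rw [mul_assoc, T.addHaar_image_symm_mul_addHaar_image μ, hK, mul_one]
  rw [ENNReal.ofReal_div_of_pos hC]
  refine ENNReal.div_le_of_le_mul' (((ENNReal.mul_le_mul_iff_left hTK₀ hTK_top).1 key).trans ?_)
  exact mul_le_mul_right (measure_mono hsub) _

end AffineHaar

theorem volume_unitCube (d : ℕ) : volume (unitCube d) = 1 := by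
  have h : unitCube d = WithLp.ofLp ⁻¹' Icc 0 1 := by
    ext x
    simp [unitCube, Pi.le_def, forall_and]
  rw [h, (PiLp.volume_preserving_ofLp (Fin d)).measure_preimage
    measurableSet_Icc.nullMeasurableSet, Real.volume_Icc_pi]
  simp

section Parallelepiped

variable {d : ℕ} (b : Basis (Fin d) ℝ (EuclideanSpace ℝ (Fin d))) (p : EuclideanSpace ℝ (Fin d))

def Module.Basis.cubeAffineEquiv : EuclideanSpace ℝ (Fin d) ≃ᵃ[ℝ] EuclideanSpace ℝ (Fin d) :=
  ((LinearEquiv.smulOfNeZero ℝ _ 2 two_ne_zero).trans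
    ((EuclideanSpace.equiv (Fin d) ℝ).toLinearEquiv.trans b.equivFun.symm)).toAffineEquiv.trans
    (AffineEquiv.constVAdd ℝ _ (p - ∑ i, b i))

theorem Module.Basis.cubeAffineEquiv_apply (x : EuclideanSpace ℝ (Fin d)) :
    b.cubeAffineEquiv p x = p + ∑ i, (2 * x i - 1) • b i := by
  simp only [cubeAffineEquiv, AffineEquiv.trans_apply, LinearEquiv.coe_toAffineEquiv,
    LinearEquiv.trans_apply, LinearEquiv.smulOfNeZero_apply, map_smul,
    ContinuousLinearEquiv.coe_toLinearEquiv, equivFun_symm_apply,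
    PiLp.continuousLinearEquiv_apply, Finset.smul_sum, AffineEquiv.constVAdd_apply, vadd_eq_add,
    sub_smul, mul_smul, one_smul, Finset.sum_sub_distrib]
  abel

theorem Module.Basis.subset_cubeAffineEquiv_image_unitCube {B : Set (EuclideanSpace ℝ (Fin d))}
    (hB : ∀ x ∈ B, ∀ i, |b.repr (x - p) i| ≤ 1) : B ⊆ b.cubeAffineEquiv p '' unitCube d := by
  intro x hx
  refine ⟨WithLp.toLp 2 fun i => (b.repr (x - p) i + 1) / 2, fun i => ?_, ?_⟩
  · have := abs_le.1 (hB x hx i)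
    constructor <;> linarith
  · have hcoef : ∀ s : ℝ, 2 * ((s + 1) / 2) - 1 = s := fun s => by ring
    simp only [cubeAffineEquiv_apply, hcoef, b.sum_repr, add_sub_cancel]

-- `cubeAffineEquiv` sends `(1/2, …, 1/2)` to `p`, so this small cube goes to
-- `p + [0, 1/(d+1)] b₁ + ⋯ + [0, 1/(d+1)] b_d`.
theorem Module.Basis.cubeAffineEquiv_image_vadd_smul_unitCube_subset
    {B : Set (EuclideanSpace ℝ (Fin d))} (hB : Convex ℝ B) (hp : p ∈ B)
    (hpb : ∀ i, p + b i ∈ B) :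
    b.cubeAffineEquiv p ''
        (WithLp.toLp 2 (fun _ : Fin d => (1 / 2 : ℝ)) +ᵥ (2 * (d + 1) : ℝ)⁻¹ • unitCube d) ⊆ B := by
  rintro _ ⟨_, ⟨_, ⟨t, ht, rfl⟩, rfl⟩, rfl⟩
  have hcoef (i : Fin d) :
      2 * (WithLp.toLp 2 (fun _ : Fin d => (1 / 2 : ℝ)) +ᵥ (2 * (d + 1) : ℝ)⁻¹ • t) i - 1 =
        t i / (d + 1) := by
    simp only [vadd_eq_add, PiLp.add_apply, PiLp.smul_apply, smul_eq_mul]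
    field_simp
    ring
  rw [cubeAffineEquiv_apply]
  simp only [hcoef]
  refine hB.add_sum_smul_mem hp hpb (fun i => div_nonneg (ht i).1 (by positivity)) ?_
  rw [← Finset.sum_div, div_le_one (by positivity)]
  calc ∑ i, t i ≤ ∑ _i : Fin d, (1 : ℝ) := Finset.sum_le_sum fun i _ => (ht i).2
    _ ≤ d + 1 := by simp

end Parallelepiped

theorem exists_affineEquiv_subset_image_unitCube {d : ℕ} {B : Set (EuclideanSpace ℝ (Fin d))}
    (hBc : IsCompact B) (hBconv : Convex ℝ B) (hBint : (interior B).Nonempty) :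
    ∃ T : EuclideanSpace ℝ (Fin d) ≃ᵃ[ℝ] EuclideanSpace ℝ (Fin d), B ⊆ T '' unitCube d ∧
      volume (T '' unitCube d) ≤ ENNReal.ofReal ((2 * (d + 1)) ^ d) * volume B := by
  obtain ⟨p, hp, b, hpb, hB⟩ :=
    hBc.exists_maximal_simplex_basis (EuclideanSpace.basisFun (Fin d) ℝ).toBasis hBint
  refine ⟨b.cubeAffineEquiv p, b.subset_cubeAffineEquiv_image_unitCube p hB, ?_⟩
  have hscale : ((2 * (d + 1)) ^ d : ℝ) * |(2 * (d + 1) : ℝ)⁻¹| ^ d = 1 := by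
    rw [abs_of_pos (by positivity), ← mul_pow, mul_inv_cancel₀ (by positivity), one_pow]
  calc volume (b.cubeAffineEquiv p '' unitCube d)
      = ENNReal.ofReal ((2 * (d + 1)) ^ d) * volume (b.cubeAffineEquiv p ''
          (WithLp.toLp 2 (fun _ : Fin d => (1 / 2 : ℝ)) +ᵥ (2 * (d + 1) : ℝ)⁻¹ • unitCube d)) := by
        rw [AffineEquiv.addHaar_image_vadd_smul, finrank_euclideanSpace_fin, ← mul_assoc,
          ← ENNReal.ofReal_mul (by positivity), hscale, ENNReal.ofReal_one, one_mul]
    _ ≤ ENNReal.ofReal ((2 * (d + 1)) ^ d) * volume B :=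
        mul_le_mul_right (measure_mono
          (b.cubeAffineEquiv_image_vadd_smul_unitCube_subset p hBconv hp hpb)) _

theorem IsKENet.mono {d : ℕ} {δ δ' : ℝ} {S : Set (AffineSubspace ℝ (EuclideanSpace ℝ (Fin d)))}
    (hS : IsKENet d δ S) (hδ : δ ≤ δ') : IsKENet d δ' S :=
  fun Ξ hΞc hΞconv hΞ => hS Ξ hΞc hΞconv ((ENNReal.ofReal_le_ofReal hδ).trans hΞ)

theorem IsKFlat.map {d k : ℕ} {f : AffineSubspace ℝ (EuclideanSpace ℝ (Fin d))}
    (hf : IsKFlat d k f) (T : EuclideanSpace ℝ (Fin d) ≃ᵃ[ℝ] EuclideanSpace ℝ (Fin d)) :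
    IsKFlat d k (f.map T.toAffineMap) := by
  refine ⟨by simpa using hf.1.image T, ?_⟩
  rw [AffineSubspace.map_direction, AffineEquiv.linear_toAffineMap, LinearEquiv.finrank_map_eq]
  exact hf.2

theorem net_for_arbitrary_body_general (d k : ℕ) :
    ∃ c : ℝ, c ∈ Set.Ioo (0 : ℝ) 1 ∧
      ∀ B : Set (EuclideanSpace ℝ (Fin d)),
        IsCompact B → Convex ℝ B → (interior B).Nonempty →
        ∀ ε : ℝ, ε ∈ Set.Ioo (0 : ℝ) 1 →
        ∀ S : Finset (AffineSubspace ℝ (EuclideanSpace ℝ (Fin d))),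
          (∀ f ∈ S, IsKFlat d k f) →
          IsKENet d (c * ε) (S : Set (AffineSubspace ℝ (EuclideanSpace ℝ (Fin d)))) →
          ∃ S' : Finset (AffineSubspace ℝ (EuclideanSpace ℝ (Fin d))),
            (∀ f ∈ S', IsKFlat d k f) ∧ S'.card = S.card ∧
            ∀ Ξ : Set (EuclideanSpace ℝ (Fin d)), IsCompact Ξ → Convex ℝ Ξ →
              ENNReal.ofReal ε * volume B ≤ volume (Ξ ∩ B) →
              ∃ f ∈ S', (Ξ ∩ (f : Set (EuclideanSpace ℝ (Fin d)))).Nonempty := by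
  classical
  set C : ℝ := (2 * (d + 1)) ^ d
  have hC : 1 ≤ C := one_le_pow₀ (by linarith)
  have hC₀ : 0 < C := zero_lt_one.trans_le hC
  refine ⟨C⁻¹ / 2, ⟨by positivity, by linarith [inv_le_one_of_one_le₀ hC]⟩, ?_⟩
  intro B hBc hBconv hBint ε hε S hSflat hSnet
  obtain ⟨T, hBT, hTvol⟩ := exists_affineEquiv_subset_image_unitCube hBc hBconv hBint
  have hinj : Injective (AffineSubspace.map T.toAffineMap) :=
    (AffineSubspace.gciMapComap (f := T.toAffineMap) T.injective).l_injective
  have hnet : IsKENet d (ε / C) S := hSnet.mono <| by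
    rw [div_mul_eq_mul_div, inv_mul_eq_div]
    exact half_le_self (div_pos hε.1 hC₀).le
  refine ⟨S.image (·.map T.toAffineMap), Finset.forall_mem_image.2 fun f hf => (hSflat f hf).map T,
    Finset.card_image_of_injective S hinj, fun Ξ hΞc hΞconv hΞ => ?_⟩
  obtain ⟨f, hfS, _, ⟨y, hyΞ, rfl⟩, hyf⟩ := hnet (T.symm '' Ξ)
    (hΞc.image T.symm.continuous_of_finiteDimensional) (hΞconv.affine_image T.symm.toAffineMap)
    (T.ofReal_div_le_addHaar_image_symm_inter volume hC₀ (volume_unitCube d) hBT hTvol hΞ)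
  exact ⟨f.map T.toAffineMap, Finset.mem_image_of_mem _ hfS, y, hyΞ,
    AffineSubspace.mem_map.2 ⟨_, hyf, by simp⟩⟩

/-- Replacing the cube by an arbitrary compact convex body `B` with nonempty interior:
there is a constant `c_d ∈ (0,1)` such that from any `(k, c_d·ε)`-net for `[0,1]^d` one
obtains an equally large family of `k`-flats stabbing every compact convex `Ξ` with
`vol(Ξ ∩ B) ≥ ε·vol(B)`. -/
theorem net_for_arbitrary_body (d k : ℕ) (hd : 1 ≤ d) (hk : k ≤ d - 1) :
    ∃ c : ℝ, c ∈ Set.Ioo (0 : ℝ) 1 ∧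
      ∀ B : Set (EuclideanSpace ℝ (Fin d)),
        IsCompact B → Convex ℝ B → (interior B).Nonempty →
        ∀ ε : ℝ, ε ∈ Set.Ioo (0 : ℝ) 1 →
        ∀ S : Finset (AffineSubspace ℝ (EuclideanSpace ℝ (Fin d))),
          (∀ f ∈ S, IsKFlat d k f) →
          IsKENet d (c * ε) (S : Set (AffineSubspace ℝ (EuclideanSpace ℝ (Fin d)))) →
          ∃ S' : Finset (AffineSubspace ℝ (EuclideanSpace ℝ (Fin d))),
            (∀ f ∈ S', IsKFlat d k f) ∧ S'.card = S.card ∧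
            ∀ Ξ : Set (EuclideanSpace ℝ (Fin d)), IsCompact Ξ → Convex ℝ Ξ →
              ENNReal.ofReal ε * volume B ≤ volume (Ξ ∩ B) →
              ∃ f ∈ S', (Ξ ∩ (f : Set (EuclideanSpace ℝ (Fin d)))).Nonempty :=
  net_for_arbitrary_body_general d k
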